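/- There exist constants c, C > 0 depending only on p such that for all δ ≥ 0, all a ≥ 0 and all t ≥ 0: c·(δ+a+t)^{p−2}·t² ≤ φ_a(t) ≤ C·(δ+a+t)^{p−2}·t². (In particular, taking a = 0, φ(t) ∼ (δ+t)^{p−2}·t² uniformly in t and δ.) -/

import Mathlib

/-!
With `b = δ + a` and `q = p - 2 > -1`, the integrand `g s = (b + s) ^ q * s` is nondecreasing on
`[0, ∞)`, being the product of the nondecreasing factors `(b + s) ^ (q + 1)` and `s / (b + s)`.
Hence `∫₀ᵗ g ≤ t * g t = (b + t) ^ q * t²`, so `C = 1`, and `∫₀ᵗ g ≥ (t / 2) * g (t / 2)`.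
Since `b + t / 2` lies within a factor `2` of `b + t`, `(b + t / 2) ^ q ≥ 2 ^ (-|q|) * (b + t) ^ q`,
which gives `c = 1 / (4 * 2 ^ |q|)`.
-/

open MeasureTheory intervalIntegral Real Set

lemma monotoneOn_add_rpow_mul_self {b q : ℝ} (hb : 0 ≤ b) (hq : -1 ≤ q) :
    MonotoneOn (fun s => (b + s) ^ q * s) (Ici 0) := by
  intro s hs t ht hst
  rcases (mem_Ici.1 hs).eq_or_lt with rfl | hs0
  · simp only [mul_zero]
    exact mul_nonneg (rpow_nonneg (by linarith [mem_Ici.1 ht]) _) ht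
  have split : ∀ x, 0 < x → (b + x) ^ q * x = (b + x) ^ (q + 1) * (x / (b + x)) := by
    intro x hx
    have hbx : 0 < b + x := by positivity
    rw [rpow_add_one hbx.ne']
    field_simp
  have ht0 : 0 < t := hs0.trans_le hst
  simp only
  rw [split s hs0, split t ht0]
  have hfrac : s / (b + s) ≤ t / (b + t) := by
    rw [div_le_div_iff₀ (by positivity) (by positivity)]
    nlinarith
  exact mul_le_mul (rpow_le_rpow (by positivity) (by linarith) (by linarith)) hfrac
    (by positivity) (by positivity)

lemma rpow_le_two_rpow_abs_mul_rpow {x y : ℝ} (q : ℝ) (hy : 0 < y) (hyx : y ≤ x)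
    (hx : x ≤ 2 * y) : x ^ q ≤ 2 ^ |q| * y ^ q := by
  rw [rpow_def_of_pos (hy.trans_le hyx), rpow_def_of_pos two_pos, rpow_def_of_pos hy,
    ← exp_add, exp_le_exp]
  have hlog_nonneg : 0 ≤ log x - log y := sub_nonneg.2 (log_le_log hy hyx)
  have hlog_le : log x - log y ≤ log 2 := by
    rw [← log_div (hy.trans_le hyx).ne' hy.ne']
    exact log_le_log (div_pos (hy.trans_le hyx) hy) ((div_le_iff₀ hy).2 hx)
  nlinarith [le_abs_self q, abs_nonneg q]

lemma integral_le_sub_mul_of_monotoneOn {g : ℝ → ℝ} {a b : ℝ} (hab : a ≤ b)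
    (hg : MonotoneOn g (Icc a b)) : ∫ s in a..b, g s ≤ (b - a) * g b := by
  have h := integral_mono_on hab
    ((hg.mono (uIcc_of_le hab).subset).intervalIntegrable (μ := volume)) intervalIntegrable_const
    fun s hs => hg hs (right_mem_Icc.2 hab) hs.2
  rwa [intervalIntegral.integral_const, smul_eq_mul] at h

lemma sub_mul_le_integral_of_monotoneOn {g : ℝ → ℝ} {a b : ℝ} (hab : a ≤ b)
    (hg : MonotoneOn g (Icc a b)) : (b - a) * g a ≤ ∫ s in a..b, g s := by
  have h := integral_mono_on hab (intervalIntegrable_const (μ := volume))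
    (hg.mono (uIcc_of_le hab).subset).intervalIntegrable
    fun s hs => hg (left_mem_Icc.2 hab) hs hs.1
  rwa [intervalIntegral.integral_const, smul_eq_mul] at h

lemma sub_mul_le_integral_of_monotoneOn_of_nonneg {g : ℝ → ℝ} {a u b : ℝ} (hau : a ≤ u)
    (hub : u ≤ b) (hg : MonotoneOn g (Icc a b)) (hga : 0 ≤ g a) :
    (b - u) * g u ≤ ∫ s in a..b, g s := by
  have hg₁ : MonotoneOn g (Icc a u) := hg.mono (Icc_subset_Icc_right hub)
  have hg₂ : MonotoneOn g (Icc u b) := hg.mono (Icc_subset_Icc_left hau)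
  rw [← integral_add_adjacent_intervals
    (hg₁.mono (uIcc_of_le hau).subset).intervalIntegrable (μ := volume)
    (hg₂.mono (uIcc_of_le hub).subset).intervalIntegrable]
  have hlow := sub_mul_le_integral_of_monotoneOn hau hg₁
  have hhigh := sub_mul_le_integral_of_monotoneOn hub hg₂
  linarith [mul_nonneg (sub_nonneg.2 hau) hga]

theorem stmt3 (p : ℝ) (hp : 1 < p) :
    ∃ c : ℝ, 0 < c ∧ ∃ C : ℝ, 0 < C ∧
      ∀ δ : ℝ, 0 ≤ δ → ∀ a : ℝ, 0 ≤ a → ∀ t : ℝ, 0 ≤ t →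
        c * ((δ + a + t) ^ (p - 2) * t ^ 2)
            ≤ (∫ s in (0:ℝ)..t, (δ + a + s) ^ (p - 2) * s) ∧
        (∫ s in (0:ℝ)..t, (δ + a + s) ^ (p - 2) * s)
            ≤ C * ((δ + a + t) ^ (p - 2) * t ^ 2) := by
  refine ⟨1 / (4 * 2 ^ |p - 2|), by positivity, 1, one_pos, fun δ hδ a ha t ht => ?_⟩
  set b := δ + a
  have hb : 0 ≤ b := add_nonneg hδ ha
  have hg : MonotoneOn (fun s => (b + s) ^ (p - 2) * s) (Icc 0 t) :=
    (monotoneOn_add_rpow_mul_self hb (by linarith)).mono Icc_subset_Ici_self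
  constructor
  · rcases ht.eq_or_lt with rfl | ht0
    · simp
    have hcmp : (b + t) ^ (p - 2) ≤ 2 ^ |p - 2| * (b + t / 2) ^ (p - 2) :=
      rpow_le_two_rpow_abs_mul_rpow (p - 2) (by positivity) (by linarith) (by linarith)
    calc 1 / (4 * 2 ^ |p - 2|) * ((b + t) ^ (p - 2) * t ^ 2)
        ≤ 1 / (4 * 2 ^ |p - 2|) * (2 ^ |p - 2| * (b + t / 2) ^ (p - 2) * t ^ 2) := by gcongr
      _ = (t - t / 2) * ((b + t / 2) ^ (p - 2) * (t / 2)) := by field_simp; ring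
      _ ≤ _ := sub_mul_le_integral_of_monotoneOn_of_nonneg (g := fun s => (b + s) ^ (p - 2) * s)
        (by linarith) (by linarith) hg (by simp)
  · have h := integral_le_sub_mul_of_monotoneOn ht hg
    rw [sub_zero] at h
    linarith
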